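/- There exists a constant C depending only on M₂ and c_φ (one may take C = max(M₂, c_φ)) such that for all a, b ∈ ℝ, 2 I_β(a,b) + φ^β(b,a) ≤ C |b − a| ω(ϑ)² + C min{ 2ϑ, |b − a| }. -/

import Mathlib

/-!
Write `s(μ) = β'(μ - a)`. Since `β'(0) = 0`, the kernel integral `∫_μ^a β''(μ - σ) dσ` equals
`-s(μ)`, and on the support `|μ - σ| ≤ ϑ` of `β''` the modulus of continuity gives
`g(σ) ≥ g(μ) - ω(ϑ)`. Hence the inner integral `Q(μ)` is bounded by `-s(μ) (g(μ) - ω(ϑ))`, from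
above for `μ ≥ a` and from below for `μ ≤ a`, and the integrand `2 Q g + s g²` of the left-hand
side is `≤ s (ω(ϑ)² - (g - ω(ϑ))²)` resp. `≥` it. As `s` has the sign of `μ - a` and `|s| ≤ M₂`,
the integrand is at most `M₂ ω(ϑ)²` to the right of `a` and at least `-M₂ ω(ϑ)²` to its left,
so the oriented integral from `a` to `b` is at most `M₂ ω(ϑ)² |b - a|`.
-/

open Set MeasureTheory intervalIntegral

theorem intervalIntegral_le_mul_abs_sub {f : ℝ → ℝ} {a b K : ℝ}
    (hf : IntervalIntegrable f volume a b)
    (h_right : ∀ x, a ≤ x → f x ≤ K) (h_left : ∀ x, x ≤ a → -K ≤ f x) :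
    ∫ x in a..b, f x ≤ K * |b - a| := by
  rcases le_total a b with hab | hba
  · calc ∫ x in a..b, f x ≤ ∫ _ in a..b, K :=
          integral_mono_on hab hf intervalIntegrable_const fun x hx => h_right x hx.1
      _ = K * |b - a| := by simp [abs_of_nonneg (sub_nonneg.2 hab), mul_comm]
  · have h : ∫ _ in b..a, -K ≤ ∫ x in b..a, f x :=
      integral_mono_on hba intervalIntegrable_const hf.symm fun x hx => h_left x hx.2
    rw [integral_symm, abs_of_nonpos (sub_nonpos.2 hba)]
    simp only [intervalIntegral.integral_const, smul_eq_mul] at h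
    linarith

theorem deriv_neg_of_even {f : ℝ → ℝ} (hf : ∀ x, f (-x) = f x) (x : ℝ) :
    deriv f (-x) = -deriv f x := by
  have h := deriv_comp_neg (f := f) (x := -x)
  rwa [funext hf, neg_neg] at h

theorem le_add_mul_of_deriv_le_of_deriv_eq_zero {f : ℝ → ℝ} {K ϑ r : ℝ}
    (hf : Differentiable ℝ f) (hK : 0 ≤ K) (h_le : ∀ x, deriv f x ≤ K)
    (h_zero : ∀ x, ϑ < x → deriv f x = 0) (hϑ : 0 ≤ ϑ) (hr : 0 ≤ r) :
    f r ≤ f 0 + K * ϑ := by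
  rcases le_total r ϑ with hrϑ | hϑr
  · nlinarith [image_sub_le_mul_sub_of_deriv_le hf h_le hr]
  · have h_flat : f r - f ϑ ≤ 0 * (r - ϑ) :=
      (convex_Ici ϑ).image_sub_le_mul_sub_of_deriv_le hf.continuous.continuousOn
        hf.differentiableOn (fun x hx => by rw [interior_Ici] at hx; exact (h_zero x hx).le)
        ϑ self_mem_Ici r hϑr hϑr
    linarith [image_sub_le_mul_sub_of_deriv_le hf h_le hϑ]

theorem deriv_zero_of_even {f : ℝ → ℝ} (hf : ∀ x, f (-x) = f x) : deriv f 0 = 0 := by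
  have h := deriv_neg_of_even hf 0
  rw [neg_zero] at h
  linarith

theorem deriv_mem_Icc_of_even {β : ℝ → ℝ} {ϑ M r : ℝ} (hβ' : Differentiable ℝ (deriv β))
    (hβ : ∀ x, β (-x) = β x) (hβ''0 : ∀ x, 0 ≤ deriv (deriv β) x)
    (hβ''le : ∀ x, deriv (deriv β) x ≤ M / ϑ) (hβ''zero : ∀ x, ϑ < x → deriv (deriv β) x = 0)
    (hϑ : 0 < ϑ) (hr : 0 ≤ r) : deriv β r ∈ Icc 0 M ∧ deriv β (-r) ∈ Icc (-M) 0 := by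
  have hβ'0 := deriv_zero_of_even hβ
  have h_nonneg : 0 ≤ deriv β r := hβ'0 ▸ monotone_of_deriv_nonneg hβ' hβ''0 hr
  have h_le : deriv β r ≤ M := by
    simpa [hβ'0, div_mul_cancel₀ _ hϑ.ne'] using le_add_mul_of_deriv_le_of_deriv_eq_zero hβ'
      ((hβ''0 0).trans (hβ''le 0)) hβ''le hβ''zero hϑ.le hr
  rw [deriv_neg_of_even hβ]
  exact ⟨⟨h_nonneg, h_le⟩, ⟨neg_le_neg h_le, neg_nonpos.2 h_nonneg⟩⟩

theorem integral_deriv_comp_sub_left {F : ℝ → ℝ} (hF : Differentiable ℝ F)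
    (hF' : Continuous (deriv F)) (μ a : ℝ) :
    ∫ σ in μ..a, deriv F (μ - σ) = F 0 - F (μ - a) := by
  rw [integral_comp_sub_left (deriv F) μ, sub_self,
    integral_deriv_eq_sub (fun x _ => hF x) (hF'.intervalIntegrable _ _)]

theorem mul_sub_le_mul_of_modulus {k g ω : ℝ → ℝ} {ϑ : ℝ} (hk : ∀ r, 0 ≤ k r)
    (hk_supp : ∀ r, ϑ < |r| → k r = 0) (hϑ : 0 ≤ ϑ) (hω_mono : MonotoneOn ω (Ici 0))
    (hω_mod : ∀ x y, |g x - g y| ≤ ω |x - y|) (μ σ : ℝ) :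
    k (μ - σ) * (g μ - ω ϑ) ≤ k (μ - σ) * g σ := by
  rcases le_or_gt |μ - σ| ϑ with h | h
  · refine mul_le_mul_of_nonneg_left ?_ (hk _)
    have hosc : |g μ - g σ| ≤ ω ϑ :=
      (hω_mod μ σ).trans (hω_mono (mem_Ici.2 (abs_nonneg _)) (mem_Ici.2 hϑ) h)
    linarith [(abs_le.mp hosc).2]
  · simp [hk_supp _ h]

section Integrand

variable {F g : ℝ → ℝ} {a c μ : ℝ}

theorem integral_kernel_mul_const (hF : Differentiable ℝ F) (hF' : Continuous (deriv F))
    (hF0 : F 0 = 0) :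
    ∫ σ in μ..a, deriv F (μ - σ) * (g μ - c) = -F (μ - a) * (g μ - c) := by
  rw [intervalIntegral.integral_mul_const, integral_deriv_comp_sub_left hF hF', hF0, zero_sub]

theorem integral_kernel_mul_le (hF : Differentiable ℝ F) (hF' : Continuous (deriv F))
    (hF0 : F 0 = 0) (hg : Continuous g)
    (h_pt : ∀ σ, deriv F (μ - σ) * (g μ - c) ≤ deriv F (μ - σ) * g σ) (hμ : a ≤ μ) :
    ∫ σ in μ..a, deriv F (μ - σ) * g σ ≤ -F (μ - a) * (g μ - c) := by
  have hcont : Continuous fun σ => deriv F (μ - σ) := hF'.comp (continuous_sub_left μ)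
  have h : ∫ σ in a..μ, deriv F (μ - σ) * (g μ - c) ≤ ∫ σ in a..μ, deriv F (μ - σ) * g σ :=
    integral_mono_on hμ ((hcont.mul continuous_const).intervalIntegrable a μ)
      ((hcont.mul hg).intervalIntegrable a μ) fun σ _ => h_pt σ
  rw [integral_symm μ a, integral_symm μ a, integral_kernel_mul_const hF hF' hF0] at h
  linarith

theorem le_integral_kernel_mul (hF : Differentiable ℝ F) (hF' : Continuous (deriv F))
    (hF0 : F 0 = 0) (hg : Continuous g)
    (h_pt : ∀ σ, deriv F (μ - σ) * (g μ - c) ≤ deriv F (μ - σ) * g σ) (hμ : μ ≤ a) :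
    -F (μ - a) * (g μ - c) ≤ ∫ σ in μ..a, deriv F (μ - σ) * g σ := by
  have hcont : Continuous fun σ => deriv F (μ - σ) := hF'.comp (continuous_sub_left μ)
  rw [← integral_kernel_mul_const hF hF' hF0]
  exact integral_mono_on hμ ((hcont.mul continuous_const).intervalIntegrable μ a)
    ((hcont.mul hg).intervalIntegrable μ a) fun σ _ => h_pt σ

theorem kernel_integrand_le (hF : Differentiable ℝ F) (hF' : Continuous (deriv F))
    (hF0 : F 0 = 0) (hg : Continuous g) (hgμ : 0 ≤ g μ) {M : ℝ} (hs : F (μ - a) ∈ Icc 0 M)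
    (h_pt : ∀ σ, deriv F (μ - σ) * (g μ - c) ≤ deriv F (μ - σ) * g σ) (hμ : a ≤ μ) :
    2 * ((∫ σ in μ..a, deriv F (μ - σ) * g σ) * g μ) + F (μ - a) * g μ ^ 2 ≤ M * c ^ 2 := by
  have hQ := integral_kernel_mul_le hF hF' hF0 hg h_pt hμ
  -- `2 Q g + s g² ≤ s (2 g c - g²) = s (c² - (g - c)²) ≤ s c²`
  nlinarith [mul_le_mul_of_nonneg_right hQ hgμ, mul_nonneg hs.1 (sq_nonneg (g μ - c)),
    mul_le_mul_of_nonneg_right hs.2 (sq_nonneg c)]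

theorem neg_le_kernel_integrand (hF : Differentiable ℝ F) (hF' : Continuous (deriv F))
    (hF0 : F 0 = 0) (hg : Continuous g) (hgμ : 0 ≤ g μ) {M : ℝ} (hs : F (μ - a) ∈ Icc (-M) 0)
    (h_pt : ∀ σ, deriv F (μ - σ) * (g μ - c) ≤ deriv F (μ - σ) * g σ) (hμ : μ ≤ a) :
    -(M * c ^ 2) ≤ 2 * ((∫ σ in μ..a, deriv F (μ - σ) * g σ) * g μ) + F (μ - a) * g μ ^ 2 := by
  have hQ := le_integral_kernel_mul hF hF' hF0 hg h_pt hμ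
  nlinarith [mul_le_mul_of_nonneg_right hQ hgμ, mul_nonpos_of_nonpos_of_nonneg hs.2
    (sq_nonneg (g μ - c)), mul_le_mul_of_nonneg_right hs.1 (sq_nonneg c)]

theorem continuous_integral_kernel_mul {k : ℝ → ℝ} (hk : Continuous k) (hg : Continuous g)
    (a : ℝ) : Continuous fun μ => ∫ σ in μ..a, k (μ - σ) * g σ := by
  rw [funext fun μ => integral_symm (μ := volume) (f := fun σ => k (μ - σ) * g σ) a μ]
  exact (continuous_parametric_intervalIntegral_of_continuous
    (f := fun μ σ => k (μ - σ) * g σ) (by fun_prop) continuous_id).neg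

end Integrand

theorem stmt7_general (ϑ M₂ cφ : ℝ) (hϑ : 0 < ϑ) (hM₂ : 0 < M₂)
    (β : ℝ → ℝ) (hβC2 : ContDiff ℝ 2 β) (hβeven : ∀ r : ℝ, β (-r) = β r)
    (hβ''0 : ∀ r : ℝ, 0 ≤ deriv (deriv β) r)
    (hβ''le : ∀ r : ℝ, deriv (deriv β) r ≤ M₂ / ϑ)
    (hβ''supp : ∀ r : ℝ, ϑ < |r| → deriv (deriv β) r = 0)
    (g : ℝ → ℝ) (hg : Continuous g) (hg0 : ∀ σ : ℝ, 0 ≤ g σ)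
    (ω : ℝ → ℝ)
    (hω_mono : MonotoneOn ω (Set.Ici 0))
    (hω_mod : ∀ x y : ℝ, |g x - g y| ≤ ω |x - y|) :
    ∀ a b : ℝ,
      2 * (∫ μ in a..b, (∫ σ in μ..a, deriv (deriv β) (μ - σ) * g σ) * g μ)
          + (∫ σ in a..b, deriv β (σ - a) * (g σ) ^ 2)
        ≤ max M₂ cφ * |b - a| * (ω ϑ) ^ 2 + max M₂ cφ * min (2 * ϑ) |b - a| := by
  intro a b
  obtain ⟨hβ', hβ''⟩ : Differentiable ℝ (deriv β) ∧ Continuous (deriv (deriv β)) :=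
    contDiff_one_iff_deriv.mp (contDiff_succ_iff_deriv.mp (show ContDiff ℝ (1 + 1) β from hβC2)).2.2
  have hβ'0 := deriv_zero_of_even hβeven
  have hβ'_mem (r : ℝ) (hr : 0 ≤ r) := deriv_mem_Icc_of_even hβ' hβeven hβ''0 hβ''le
    (fun x hx => hβ''supp x (by rwa [abs_of_pos (hϑ.trans hx)])) hϑ hr
  have h_pt := mul_sub_le_mul_of_modulus hβ''0 hβ''supp hϑ.le hω_mono hω_mod
  have hQg_int : IntervalIntegrable
      (fun μ => 2 * ((∫ σ in μ..a, deriv (deriv β) (μ - σ) * g σ) * g μ)) volume a b :=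
    (continuous_const.mul ((continuous_integral_kernel_mul hβ'' hg a).mul hg)).intervalIntegrable
      a b
  have hsg_int : IntervalIntegrable (fun μ => deriv β (μ - a) * g μ ^ 2) volume a b :=
    ((hβ'.continuous.comp (continuous_sub_right a)).mul (hg.pow 2)).intervalIntegrable a b
  rw [← intervalIntegral.integral_const_mul, ← integral_add hQg_int hsg_int]
  have h_int_le := intervalIntegral_le_mul_abs_sub (hQg_int.add hsg_int) (K := M₂ * ω ϑ ^ 2)
    (fun μ hμ => kernel_integrand_le hβ' hβ'' hβ'0 hg (hg0 μ) (hβ'_mem _ (sub_nonneg.2 hμ)).1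
      (h_pt μ) hμ)
    (fun μ hμ => neg_le_kernel_integrand hβ' hβ'' hβ'0 hg (hg0 μ)
      (neg_sub a μ ▸ (hβ'_mem _ (sub_nonneg.2 hμ)).2) (h_pt μ) hμ)
  have hmax := le_max_left M₂ cφ
  have hmin : 0 ≤ max M₂ cφ * min (2 * ϑ) |b - a| :=
    mul_nonneg (hM₂.le.trans hmax) (le_min (by positivity) (abs_nonneg _))
  nlinarith [mul_le_mul_of_nonneg_right hmax (mul_nonneg (abs_nonneg (b - a)) (sq_nonneg (ω ϑ)))]

/-- Under the assumptions of Statement 6, with in addition `g` nonnegative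
and `g² ≤ c_φ`, taking `C = max M₂ c_φ` one has
`2 I_β(a,b) + φ^β(b,a) ≤ C |b - a| ω(ϑ)² + C min (2ϑ) |b - a|`. -/
theorem stmt7 (ϑ M₂ cφ : ℝ) (hϑ : 0 < ϑ) (hM₂ : 0 < M₂) (hcφ : 0 < cφ)
    (β : ℝ → ℝ) (hβC2 : ContDiff ℝ 2 β) (hβeven : ∀ r : ℝ, β (-r) = β r)
    (hβ''0 : ∀ r : ℝ, 0 ≤ deriv (deriv β) r)
    (hβ''le : ∀ r : ℝ, deriv (deriv β) r ≤ M₂ / ϑ)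
    (hβ''supp : ∀ r : ℝ, ϑ < |r| → deriv (deriv β) r = 0)
    (g : ℝ → ℝ) (hg : Continuous g) (hg0 : ∀ σ : ℝ, 0 ≤ g σ)
    (hgsq : ∀ σ : ℝ, (g σ) ^ 2 ≤ cφ)
    (ω : ℝ → ℝ) (hω_nonneg : ∀ t : ℝ, 0 ≤ t → 0 ≤ ω t)
    (hω_mono : MonotoneOn ω (Set.Ici 0))
    (hω_mod : ∀ x y : ℝ, |g x - g y| ≤ ω |x - y|) :
    ∀ a b : ℝ,
      2 * (∫ μ in a..b, (∫ σ in μ..a, deriv (deriv β) (μ - σ) * g σ) * g μ)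
          + (∫ σ in a..b, deriv β (σ - a) * (g σ) ^ 2)
        ≤ max M₂ cφ * |b - a| * (ω ϑ) ^ 2 + max M₂ cφ * min (2 * ϑ) |b - a| :=
  stmt7_general ϑ M₂ cφ hϑ hM₂ β hβC2 hβeven hβ''0 hβ''le hβ''supp g hg hg0 ω hω_mono hω_mod
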